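/- arXiv:1507.04098 — 6 statements merged into one kernel-verified Lean document; each statement's English description precedes it below -/
import Mathlib

section
/- The pair of functions u₁(x) = 2tanh²x, u₂(x) = −2sech²x satisfies, for all x ∈ ℝ, the two differential equations: u₁''(x) = −2Q²(x)u₁(x) − Q²(x)u₂(x) and u₂''(x) − 2u₂(x) = −Q²(x)u₁(x) − 2Q²(x)u₂(x), where Q²(x) = 2sech²x. Equivalently, u₀ = (u₁,u₂) satisfies ℒ₃u₀ = u₀, where ℒ₃ is the linearized operator of the cubic NLS about its soliton, i.e. ℒ₃(u₁,u₂) = (−u₁'' + u₁ − 2Q²u₁ − Q²u₂, u₂'' − u₂ + Q²u₁ + 2Q²u₂). -/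
noncomputable def sech (x : ℝ) : ℝ := 1 / Real.cosh x

private lemma cosh_ne (x : ℝ) : Real.cosh x ≠ 0 := (Real.cosh_pos x).ne'

private lemma hasDerivAt_aux1 (x : ℝ) :
    HasDerivAt (fun y => 2 * Real.sinh y ^ 2 / Real.cosh y ^ 2)
      (4 * Real.sinh x / Real.cosh x ^ 3) x := by
  have hs := (Real.hasDerivAt_sinh x)
  have hc := (Real.hasDerivAt_cosh x)
  have h1 : HasDerivAt (fun y => 2 * Real.sinh y ^ 2)
      (2 * (2 * Real.sinh x * Real.cosh x)) x := by
    simpa [mul_comm, mul_assoc, mul_left_comm] using ((hs.pow 2).const_mul 2)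
  have h2 : HasDerivAt (fun y => Real.cosh y ^ 2)
      (2 * Real.cosh x * Real.sinh x) x := by
    simpa [mul_comm, mul_assoc, mul_left_comm] using hc.fun_pow 2
  have h := h1.div h2 (pow_ne_zero 2 (cosh_ne x))
  refine h.congr_deriv ?_
  have h3 := Real.cosh_sq_sub_sinh_sq x
  rw [Real.sinh_sq]
  field_simp
  ring

private lemma hasDerivAt_aux2 (x : ℝ) :
    HasDerivAt (fun y => -(2 / Real.cosh y ^ 2))
      (4 * Real.sinh x / Real.cosh x ^ 3) x := by
  have hc := (Real.hasDerivAt_cosh x)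
  have h2 : HasDerivAt (fun y => Real.cosh y ^ 2)
      (2 * Real.cosh x * Real.sinh x) x := by
    simpa [mul_comm, mul_assoc, mul_left_comm] using hc.fun_pow 2
  have h := ((hasDerivAt_const x (2 : ℝ)).div h2 (pow_ne_zero 2 (cosh_ne x))).neg
  refine h.congr_deriv ?_
  field_simp
  ring

private lemma hasDerivAt_aux3 (x : ℝ) :
    HasDerivAt (fun y => 4 * Real.sinh y / Real.cosh y ^ 3)
      (4 / Real.cosh x ^ 2 - 12 * Real.sinh x ^ 2 / Real.cosh x ^ 4) x := by
  have hs := (Real.hasDerivAt_sinh x)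
  have hc := (Real.hasDerivAt_cosh x)
  have h1 : HasDerivAt (fun y => 4 * Real.sinh y) (4 * Real.cosh x) x := hs.const_mul 4
  have h2 : HasDerivAt (fun y => Real.cosh y ^ 3)
      (3 * Real.cosh x ^ 2 * Real.sinh x) x := by
    simpa [mul_comm, mul_assoc, mul_left_comm] using hc.fun_pow 3
  have h := h1.div h2 (pow_ne_zero 3 (cosh_ne x))
  refine h.congr_deriv ?_
  field_simp
  ring

/-- The pair `u₁(x) = 2tanh²x`, `u₂(x) = −2sech²x` satisfies the system
`u₁'' = −2Q²u₁ − Q²u₂` and `u₂'' − 2u₂ = −Q²u₁ − 2Q²u₂`, where `Q² = 2sech²x`;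
equivalently `ℒ₃ u₀ = u₀` for the resonance `u₀ = (u₁,u₂)` of the linearized
cubic NLS. -/
theorem stmt_1 (u₁ u₂ Qsq : ℝ → ℝ)
    (hu₁ : ∀ x, u₁ x = 2 * Real.tanh x ^ 2)
    (hu₂ : ∀ x, u₂ x = -(2 * sech x ^ 2))
    (hQ : ∀ x, Qsq x = 2 * sech x ^ 2) :
    (∀ x : ℝ, deriv (deriv u₁) x = -(2 * Qsq x * u₁ x) - Qsq x * u₂ x) ∧
    (∀ x : ℝ, deriv (deriv u₂) x - 2 * u₂ x = -(Qsq x * u₁ x) - 2 * Qsq x * u₂ x) ∧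
    (∀ x : ℝ,
      (-(deriv (deriv u₁)) x + u₁ x - 2 * Qsq x * u₁ x - Qsq x * u₂ x = u₁ x ∧
        deriv (deriv u₂) x - u₂ x + Qsq x * u₁ x + 2 * Qsq x * u₂ x = u₂ x)) := by
  have hu₁' : u₁ = fun y => 2 * Real.sinh y ^ 2 / Real.cosh y ^ 2 := by
    funext y
    rw [hu₁ y, Real.tanh_eq_sinh_div_cosh, div_pow]
    ring
  have hu₂' : u₂ = fun y => -(2 / Real.cosh y ^ 2) := by
    funext y
    rw [hu₂ y]
    unfold sech
    rw [div_pow]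
    ring
  have d1 : deriv u₁ = fun y => 4 * Real.sinh y / Real.cosh y ^ 3 := by
    funext y
    rw [hu₁']
    exact (hasDerivAt_aux1 y).deriv
  have d2 : deriv u₂ = fun y => 4 * Real.sinh y / Real.cosh y ^ 3 := by
    funext y
    rw [hu₂']
    exact (hasDerivAt_aux2 y).deriv
  have dd1 : ∀ x, deriv (deriv u₁) x
      = 4 / Real.cosh x ^ 2 - 12 * Real.sinh x ^ 2 / Real.cosh x ^ 4 := by
    intro x
    rw [d1]
    exact (hasDerivAt_aux3 x).deriv
  have dd2 : ∀ x, deriv (deriv u₂) x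
      = 4 / Real.cosh x ^ 2 - 12 * Real.sinh x ^ 2 / Real.cosh x ^ 4 := by
    intro x
    rw [d2]
    exact (hasDerivAt_aux3 x).deriv
  have key : ∀ x : ℝ, Real.cosh x ^ 2 - Real.sinh x ^ 2 = 1 :=
    Real.cosh_sq_sub_sinh_sq
  refine ⟨?_, ?_, ?_⟩
  · intro x
    rw [dd1 x, hu₁ x, hu₂ x, hQ x, Real.tanh_eq_sinh_div_cosh]
    unfold sech
    have := key x
    have hc := cosh_ne x
    field_simp
    simp only [Real.sinh_sq]
    ring
  · intro x
    rw [dd2 x, hu₁ x, hu₂ x, hQ x, Real.tanh_eq_sinh_div_cosh]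
    unfold sech
    have := key x
    have hc := cosh_ne x
    field_simp
    simp only [Real.sinh_sq]
    ring
  · intro x
    have hc := cosh_ne x
    have := key x
    constructor
    · rw [dd1 x, hu₁ x, hu₂ x, hQ x, Real.tanh_eq_sinh_div_cosh]
      unfold sech
      field_simp
      simp only [Real.sinh_sq]
      ring
    · rw [dd2 x, hu₁ x, hu₂ x, hQ x, Real.tanh_eq_sinh_div_cosh]
      unfold sech
      field_simp
      simp only [Real.sinh_sq]
      ring
end

section
/- For every fixed x ∈ ℝ, the function p ↦ ((p+1)/2)·sech²(((p−1)/2)·x) (the function Q_p^{p−1}(x)) is twice differentiable at p = 3, and its second derivative there equals 2q₂(x), where q₂(x) = (1/2)·(2x²·tanh²x·sech²x − x²·sech⁴x − x·tanh x·sech²x). -/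
noncomputable def Fone (x p : ℝ) : ℝ :=
  1 / (2 * Real.cosh (((p - 1) / 2) * x) ^ 2)
    - (p + 1) * x * Real.sinh (((p - 1) / 2) * x) / (2 * Real.cosh (((p - 1) / 2) * x) ^ 3)

lemma hu (x p : ℝ) : HasDerivAt (fun p : ℝ => ((p - 1) / 2) * x) (x / 2) p := by
  have h := (((hasDerivAt_id p).sub_const 1).div_const 2).mul_const x
  refine h.congr_deriv ?_
  ring

lemma step1 (x p : ℝ) :
    HasDerivAt (fun p => ((p + 1) / 2) * (sech (((p - 1) / 2) * x)) ^ 2) (Fone x p) p := by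
  have hc := (hu x p).cosh
  have hcne : Real.cosh (((p - 1) / 2) * x) ≠ 0 := (Real.cosh_pos _).ne'
  have hinv := hc.inv hcne
  have hsq := hinv.pow 2
  have h1 : HasDerivAt (fun p : ℝ => (p + 1) / 2) (1 / 2) p := by
    have h := ((hasDerivAt_id p).add_const 1).div_const 2
    exact h
  have h := h1.mul hsq
  have heq : (fun p => ((p + 1) / 2) * (sech (((p - 1) / 2) * x)) ^ 2)
      = fun p => ((p + 1) / 2) * ((Real.cosh (((p - 1) / 2) * x))⁻¹) ^ 2 := by
    funext q; simp [sech, one_div]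
  rw [heq]
  refine h.congr_deriv ?_
  simp only [Fone]
  simp only [Pi.inv_apply, Pi.pow_apply, Pi.mul_apply, id_eq, Nat.reduceSub, pow_one]
  generalize Real.sinh (((p - 1) / 2) * x) = s
  generalize hcc : Real.cosh (((p - 1) / 2) * x) = c at hcne ⊢
  field_simp
  ring

lemma step2 (x p : ℝ) :
    HasDerivAt (Fone x)
      (-x * Real.sinh (((p - 1) / 2) * x) / Real.cosh (((p - 1) / 2) * x) ^ 3
        - (p + 1) * x ^ 2 * (Real.cosh (((p - 1) / 2) * x) ^ 2
            - 3 * Real.sinh (((p - 1) / 2) * x) ^ 2)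
          / (4 * Real.cosh (((p - 1) / 2) * x) ^ 4)) p := by
  have hc := (hu x p).cosh
  have hs := (hu x p).sinh
  have hcne : Real.cosh (((p - 1) / 2) * x) ≠ 0 := (Real.cosh_pos _).ne'
  have hden1 := (hc.pow 2).const_mul 2
  have hden2 := (hc.pow 3).const_mul 2
  have hd1ne : 2 * Real.cosh (((p - 1) / 2) * x) ^ 2 ≠ 0 := by positivity
  have hd2ne : 2 * Real.cosh (((p - 1) / 2) * x) ^ 3 ≠ 0 := by
    have := Real.cosh_pos (((p - 1) / 2) * x); positivity
  have ht1 := (hasDerivAt_const p (1:ℝ)).div hden1 hd1ne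
  have hnum := (((hasDerivAt_id p).add_const 1).mul_const x).mul hs
  have ht2 := hnum.div hden2 hd2ne
  have h := ht1.sub ht2
  refine h.congr_deriv ?_
  simp only [Pi.inv_apply, Pi.pow_apply, Pi.mul_apply, id_eq]
  generalize Real.sinh (((p - 1) / 2) * x) = s
  generalize hcc : Real.cosh (((p - 1) / 2) * x) = c at hcne ⊢
  field_simp
  ring

/-- For fixed `x`, the map `F : p ↦ ((p+1)/2)·sech²(((p−1)/2)·x)` (that is,
`Q_p^{p−1}(x)`) is twice differentiable at `p = 3`, and its second derivative
there equals `2q₂(x)` where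
`q₂(x) = (1/2)(2x²tanh²x·sech²x − x²sech⁴x − x·tanh x·sech²x)`. -/
theorem stmt_4 (x : ℝ)
    (F : ℝ → ℝ)
    (hF : ∀ p : ℝ, F p = ((p + 1) / 2) * (sech (((p - 1) / 2) * x)) ^ 2) :
    DifferentiableAt ℝ F 3 ∧ DifferentiableAt ℝ (deriv F) 3 ∧
      deriv (deriv F) 3 =
        2 * ((1 / 2) * (2 * x ^ 2 * Real.tanh x ^ 2 * sech x ^ 2
          - x ^ 2 * sech x ^ 4 - x * Real.tanh x * sech x ^ 2)) := by
  have hFe : F = fun p => ((p + 1) / 2) * (sech (((p - 1) / 2) * x)) ^ 2 := funext hF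
  subst hFe
  have hderiv : deriv (fun p => ((p + 1) / 2) * (sech (((p - 1) / 2) * x)) ^ 2) = Fone x :=
    funext fun p => (step1 x p).deriv
  refine ⟨(step1 x 3).differentiableAt, ?_, ?_⟩
  · rw [hderiv]; exact (step2 x 3).differentiableAt
  · rw [hderiv, (step2 x 3).deriv]
    have h3 : ((3:ℝ) - 1) / 2 * x = x := by norm_num
    rw [h3]
    have hcne : Real.cosh x ≠ 0 := (Real.cosh_pos _).ne'
    have hid : Real.cosh x ^ 2 - Real.sinh x ^ 2 = 1 := Real.cosh_sq_sub_sinh_sq x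
    simp only [sech, Real.tanh_eq_sinh_div_cosh]
    generalize hss : Real.sinh x = s at hid ⊢
    generalize hcc : Real.cosh x = c at hid hcne ⊢
    field_simp
    linear_combination (-(4 * x ^ 2)) * hid
end

section
/- For all x ∈ ℝ, −(1/2)·∫_ℝ |x−y|·(8sech²y − 12sech⁴y) dy = −2sech²x. Equivalently, with Q²(y) = 2sech²y: −(1/2)∫_ℝ |x−y|·(4Q²(y) − 3Q⁴(y)) dy = −Q²(x). -/
open MeasureTheory

namespace Stmt8Aux

open Real Set Filter Topology

lemma abs_sinh_le (y : ℝ) : |Real.sinh y| ≤ Real.cosh y := by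
  rw [abs_le]
  constructor
  · nlinarith [Real.cosh_add_sinh y, Real.exp_pos y]
  · nlinarith [Real.cosh_sub_sinh y, Real.exp_pos (-y)]

lemma exp_abs_le (y : ℝ) : Real.exp |y| ≤ 2 * Real.cosh y := by
  rw [← Real.cosh_abs y]
  nlinarith [Real.cosh_add_sinh |y|, abs_sinh_le |y|, le_abs_self (Real.sinh |y|)]

lemma inv_cosh_le (y : ℝ) : 1 / Real.cosh y ≤ 2 * Real.exp (-|y|) := by
  rw [div_le_iff₀ (Real.cosh_pos y)]
  have h := exp_abs_le y
  have h2 : Real.exp (-|y|) * Real.exp |y| = 1 := by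
    rw [← Real.exp_add]; simp
  nlinarith [Real.exp_pos (-|y|), Real.cosh_pos y]

/-- The integrand for the derivative lemma. -/
noncomputable def F (x y : ℝ) : ℝ :=
  (x - y) * (-4 * Real.sinh y) / Real.cosh y ^ 3 - 2 * Real.sinh y ^ 2 / Real.cosh y ^ 2

lemma hd1 (x y : ℝ) :
    HasDerivAt (F x) ((x - y) * (8 * sech y ^ 2 - 12 * sech y ^ 4)) y := by
  have hc := Real.hasDerivAt_cosh y
  have hs := Real.hasDerivAt_sinh y
  have hc0 : Real.cosh y ≠ 0 := (Real.cosh_pos y).ne'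
  have h1 : HasDerivAt (fun y => (x - y) * (-4 * Real.sinh y))
      ((-1) * (-4 * Real.sinh y) + (x - y) * (-4 * Real.cosh y)) y := by
    exact (((hasDerivAt_id y).const_sub x).mul (hs.const_mul (-4)))
  have h2 : HasDerivAt (fun y => Real.cosh y ^ 3) (3 * Real.cosh y ^ 2 * Real.sinh y) y := by
    simpa using hc.fun_pow 3
  have h3 : HasDerivAt (fun y => 2 * Real.sinh y ^ 2)
      (2 * (2 * Real.sinh y * Real.cosh y)) y := by
    simpa [mul_comm, mul_assoc] using ((hs.pow 2).const_mul 2)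
  have h4 : HasDerivAt (fun y => Real.cosh y ^ 2) (2 * Real.cosh y * Real.sinh y) y := by
    simpa using hc.fun_pow 2
  have H := (h1.div h2 (pow_ne_zero 3 hc0)).sub (h3.div h4 (pow_ne_zero 2 hc0))
  refine H.congr_deriv (Eq.symm ?_)
  have hsq := Real.cosh_sq y
  simp only [sech]
  field_simp
  ring_nf
  linear_combination (12*(x - y) + 4*Real.cosh y*Real.sinh y) * hsq

lemma decay_top (c : ℝ) : Tendsto (fun t : ℝ => (c + t) * Real.exp (-2 * t)) atTop (𝓝 0) := by
  have h1 : Tendsto (fun t : ℝ => 2 * t) atTop atTop :=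
    Tendsto.const_mul_atTop two_pos tendsto_id
  have h2 : Tendsto (fun t : ℝ => Real.exp (-2 * t)) atTop (𝓝 0) := by
    refine (Real.tendsto_exp_neg_atTop_nhds_zero.comp h1).congr fun t => ?_
    simp [Function.comp, neg_mul]
  have h3 : Tendsto (fun t : ℝ => t * Real.exp (-2 * t)) atTop (𝓝 0) := by
    have h4 := (Real.tendsto_pow_mul_exp_neg_atTop_nhds_zero 1).comp h1
    have h5 : Tendsto (fun t : ℝ => (1/2) * ((2*t)^1 * Real.exp (-(2*t)))) atTop (𝓝 0) := by
      simpa using h4.const_mul (1/2 : ℝ)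
    refine h5.congr fun t => by ring_nf
  have := (h2.const_mul c).add h3
  simpa [add_mul] using this

/-- Both tails: the function `y ↦ (c + |y|) exp (-2|y|)` tends to `0` at `±∞`. -/
lemma decay_abs_top (c : ℝ) :
    Tendsto (fun y : ℝ => (c + |y|) * Real.exp (-2 * |y|)) atTop (𝓝 0) :=
  (decay_top c).comp tendsto_abs_atTop_atTop

lemma decay_abs_bot (c : ℝ) :
    Tendsto (fun y : ℝ => (c + |y|) * Real.exp (-2 * |y|)) atBot (𝓝 0) :=
  (decay_top c).comp tendsto_abs_atBot_atTop

lemma first_term_bound (x y : ℝ) :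
    ‖(x - y) * (-4 * Real.sinh y) / Real.cosh y ^ 3‖
      ≤ 16 * ((|x| + |y|) * Real.exp (-2 * |y|)) := by
  have hc : (0:ℝ) < Real.cosh y := Real.cosh_pos y
  have h1 : |Real.sinh y| ≤ Real.cosh y := abs_sinh_le y
  have h2 : 1 / Real.cosh y ≤ 2 * Real.exp (-|y|) := inv_cosh_le y
  have hE : (0:ℝ) < Real.exp (-|y|) := Real.exp_pos _
  have hxy : |x - y| ≤ |x| + |y| := abs_sub x y
  have hexp2 : Real.exp (-2 * |y|) = Real.exp (-|y|) * Real.exp (-|y|) := by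
    rw [← Real.exp_add]; ring_nf
  rw [norm_eq_abs, abs_div, abs_mul, abs_mul]
  have hc3 : |Real.cosh y ^ 3| = Real.cosh y ^ 3 := abs_of_pos (by positivity)
  rw [hc3]
  rw [div_le_iff₀ (by positivity)]
  have key : 1 ≤ (2 * Real.exp (-|y|)) * Real.cosh y := by
    rw [div_le_iff₀ hc] at h2
    linarith
  have h4 : |(-4 : ℝ)| = 4 := by norm_num
  rw [h4, hexp2]
  have k2 : (1:ℝ) ≤ (2 * Real.exp (-|y|) * Real.cosh y) * (2 * Real.exp (-|y|) * Real.cosh y) := by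
    nlinarith [key]
  have m1 : |x - y| * (4 * |Real.sinh y|) ≤ (|x| + |y|) * (4 * Real.cosh y) := by
    apply mul_le_mul hxy (by linarith) (by positivity) (by positivity)
  have pos : (0:ℝ) ≤ (|x| + |y|) * (4 * Real.cosh y) := by positivity
  nlinarith [m1, mul_le_mul_of_nonneg_left k2 pos]

lemma first_term_top (x : ℝ) :
    Tendsto (fun y => (x - y) * (-4 * Real.sinh y) / Real.cosh y ^ 3) atTop (𝓝 0) := by
  refine squeeze_zero_norm (fun y => first_term_bound x y) ?_
  simpa using (decay_abs_top |x|).const_mul 16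

lemma first_term_bot (x : ℝ) :
    Tendsto (fun y => (x - y) * (-4 * Real.sinh y) / Real.cosh y ^ 3) atBot (𝓝 0) := by
  refine squeeze_zero_norm (fun y => first_term_bound x y) ?_
  simpa using (decay_abs_bot |x|).const_mul 16

lemma inv_cosh_sq_bound (y : ℝ) :
    ‖2 / Real.cosh y ^ 2‖ ≤ 8 * Real.exp (-2 * |y|) := by
  have hc : (0:ℝ) < Real.cosh y := Real.cosh_pos y
  have h2 : 1 / Real.cosh y ≤ 2 * Real.exp (-|y|) := inv_cosh_le y
  have hE : (0:ℝ) < Real.exp (-|y|) := Real.exp_pos _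
  have hexp2 : Real.exp (-2 * |y|) = Real.exp (-|y|) * Real.exp (-|y|) := by
    rw [← Real.exp_add]; ring_nf
  rw [norm_eq_abs, abs_of_pos (by positivity), hexp2]
  rw [div_le_iff₀ (by positivity)] at h2 ⊢
  nlinarith [mul_pos hc hc]

lemma exp_neg_two_abs_top : Tendsto (fun y : ℝ => Real.exp (-2 * |y|)) atTop (𝓝 0) := by
  have h1 : Tendsto (fun t : ℝ => 2 * t) atTop atTop :=
    Tendsto.const_mul_atTop two_pos tendsto_id
  refine ((Real.tendsto_exp_neg_atTop_nhds_zero.comp h1).comp tendsto_abs_atTop_atTop).congr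
    fun t => ?_
  simp [Function.comp, neg_mul]

lemma exp_neg_two_abs_bot : Tendsto (fun y : ℝ => Real.exp (-2 * |y|)) atBot (𝓝 0) := by
  have h1 : Tendsto (fun t : ℝ => 2 * t) atTop atTop :=
    Tendsto.const_mul_atTop two_pos tendsto_id
  refine ((Real.tendsto_exp_neg_atTop_nhds_zero.comp h1).comp tendsto_abs_atBot_atTop).congr
    fun t => ?_
  simp [Function.comp, neg_mul]

lemma second_term_eq (y : ℝ) :
    2 * Real.sinh y ^ 2 / Real.cosh y ^ 2 = 2 - 2 / Real.cosh y ^ 2 := by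
  have hc0 : Real.cosh y ≠ 0 := (Real.cosh_pos y).ne'
  have hsq := Real.cosh_sq y
  field_simp
  linarith

lemma second_term_top :
    Tendsto (fun y => 2 * Real.sinh y ^ 2 / Real.cosh y ^ 2) atTop (𝓝 2) := by
  have h0 : Tendsto (fun y : ℝ => 2 / Real.cosh y ^ 2) atTop (𝓝 0) := by
    refine squeeze_zero_norm inv_cosh_sq_bound ?_
    simpa using exp_neg_two_abs_top.const_mul 8
  have := (tendsto_const_nhds (x := (2:ℝ)) (f := atTop)).sub h0
  rw [sub_zero] at this
  exact this.congr fun y => (second_term_eq y).symm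

lemma second_term_bot :
    Tendsto (fun y => 2 * Real.sinh y ^ 2 / Real.cosh y ^ 2) atBot (𝓝 2) := by
  have h0 : Tendsto (fun y : ℝ => 2 / Real.cosh y ^ 2) atBot (𝓝 0) := by
    refine squeeze_zero_norm inv_cosh_sq_bound ?_
    simpa using exp_neg_two_abs_bot.const_mul 8
  have := (tendsto_const_nhds (x := (2:ℝ)) (f := atBot)).sub h0
  rw [sub_zero] at this
  exact this.congr fun y => (second_term_eq y).symm

lemma F_tendsto_bot (x : ℝ) : Tendsto (F x) atBot (𝓝 (-2)) := by
  have h := (first_term_bot x).sub (second_term_bot)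
  have h2 : (0:ℝ) - 2 = -2 := by norm_num
  rw [h2] at h
  exact h

lemma F_tendsto_top (x : ℝ) : Tendsto (F x) atTop (𝓝 (-2)) := by
  have h := (first_term_top x).sub (second_term_top)
  have h2 : (0:ℝ) - 2 = -2 := by norm_num
  rw [h2] at h
  exact h

lemma integrable_exp_neg_abs : Integrable (fun y : ℝ => Real.exp (-|y|)) := by
  have h1 : IntegrableOn (fun y : ℝ => Real.exp (-|y|)) (Iic 0) := by
    refine (integrableOn_exp_Iic 0).congr_fun (fun y hy => ?_) measurableSet_Iic
    rw [abs_of_nonpos hy, neg_neg]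
  have h2 : IntegrableOn (fun y : ℝ => Real.exp (-|y|)) (Ioi 0) := by
    refine (exp_neg_integrableOn_Ioi 0 one_pos).congr_fun (fun y hy => ?_) measurableSet_Ioi
    rw [abs_of_pos hy]; ring_nf
  have := h1.union h2
  rwa [Iic_union_Ioi, integrableOn_univ] at this

lemma integrand_bound (x y : ℝ) :
    ‖|x - y| * (8 * sech y ^ 2 - 12 * sech y ^ 4)‖ ≤ 80 * (|x| + 1) * Real.exp (-|y|) := by
  have hc : (0:ℝ) < Real.cosh y := Real.cosh_pos y
  have hs0 : (0:ℝ) < sech y := by simp only [sech]; positivity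
  have hs1 : sech y ≤ 1 := by
    simp only [sech]
    rw [div_le_one hc]
    exact Real.one_le_cosh y
  have hsE : sech y ≤ 2 * Real.exp (-|y|) := inv_cosh_le y
  have hE : (0:ℝ) < Real.exp (-|y|) := Real.exp_pos _
  have hE1 : Real.exp (-|y|) ≤ 1 := Real.exp_le_one_iff.mpr (neg_nonpos.mpr (abs_nonneg y))
  have hyE : |y| * Real.exp (-|y|) ≤ 1 := by
    have h := Real.add_one_le_exp |y|
    have h2 : Real.exp (-|y|) * Real.exp |y| = 1 := by rw [← Real.exp_add]; simp
    nlinarith [abs_nonneg y]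
  have hxy : |x - y| ≤ |x| + |y| := abs_sub x y
  have habs : |8 * sech y ^ 2 - 12 * sech y ^ 4| ≤ 20 * sech y ^ 2 := by
    rw [abs_le]
    constructor <;> nlinarith [sq_nonneg (sech y), pow_le_one₀ (le_of_lt hs0) hs1 (n := 2)]
  rw [norm_eq_abs, abs_mul, abs_abs]
  calc |x - y| * |8 * sech y ^ 2 - 12 * sech y ^ 4|
      ≤ (|x| + |y|) * (20 * sech y ^ 2) := by
        apply mul_le_mul hxy habs (abs_nonneg _) (by positivity)
    _ ≤ 80 * (|x| + 1) * Real.exp (-|y|) := by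
        have hsq : sech y ^ 2 ≤ (2 * Real.exp (-|y|)) * (2 * Real.exp (-|y|)) := by
          have := mul_le_mul hsE hsE (le_of_lt hs0) (by positivity)
          nlinarith
        nlinarith [abs_nonneg x, abs_nonneg y, mul_pos hE hE,
          mul_le_mul_of_nonneg_right hyE (le_of_lt hE),
          mul_nonneg (abs_nonneg x) (le_of_lt hE)]

lemma integrand_integrable (x : ℝ) :
    Integrable (fun y : ℝ => |x - y| * (8 * sech y ^ 2 - 12 * sech y ^ 4)) := by
  have hcont : Continuous (fun y : ℝ => |x - y| * (8 * sech y ^ 2 - 12 * sech y ^ 4)) := by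
    have hsech : Continuous sech := by
      unfold sech
      exact continuous_const.div Real.continuous_cosh (fun y => (Real.cosh_pos y).ne')
    continuity
  refine (integrable_exp_neg_abs.const_mul (80 * (|x| + 1))).mono'
    hcont.aestronglyMeasurable ?_
  filter_upwards with y
  exact integrand_bound x y

end Stmt8Aux


open Stmt8Aux Real Set Filter Topology in
/-- For all `x`, `−(1/2)∫_ℝ |x−y|·(8sech²y − 12sech⁴y) dy = −2sech²x`;
the zero-energy resolvent kernel `−|x−y|/2` applied to `4Q² − 3Q⁴` returns
`−Q²` (with `Q² = 2sech²`). -/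
theorem stmt_8 (x : ℝ) :
    -(1 / 2) * ∫ y : ℝ, |x - y| * (8 * sech y ^ 2 - 12 * sech y ^ 4)
      = -(2 * sech x ^ 2) := by
  have hInt := integrand_integrable x
  have hc0 : Real.cosh x ≠ 0 := (Real.cosh_pos x).ne'
  have hsq := Real.cosh_sq x
  have hsplit := intervalIntegral.integral_Iic_add_Ioi (b := x)
    hInt.integrableOn hInt.integrableOn
  rw [← hsplit]
  have hIic : ∫ y in Iic x, |x - y| * (8 * sech y ^ 2 - 12 * sech y ^ 4)
      = 2 * sech x ^ 2 := by
    have heq : ∀ y ∈ Iic x, |x - y| * (8 * sech y ^ 2 - 12 * sech y ^ 4)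
        = (x - y) * (8 * sech y ^ 2 - 12 * sech y ^ 4) := by
      intro y hy
      rw [abs_of_nonneg (sub_nonneg.mpr hy)]
    rw [setIntegral_congr_fun measurableSet_Iic heq]
    have hint' : IntegrableOn (fun y => (x - y) * (8 * sech y ^ 2 - 12 * sech y ^ 4)) (Iic x) :=
      hInt.integrableOn.congr_fun heq measurableSet_Iic
    rw [MeasureTheory.integral_Iic_of_hasDerivAt_of_tendsto'
      (fun y _ => hd1 x y) hint' (F_tendsto_bot x)]
    unfold F sech
    field_simp
    linear_combination (2 * Real.cosh x) * hsq
  have hIoi : ∫ y in Ioi x, |x - y| * (8 * sech y ^ 2 - 12 * sech y ^ 4)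
      = 2 * sech x ^ 2 := by
    have heq : ∀ y ∈ Ioi x, |x - y| * (8 * sech y ^ 2 - 12 * sech y ^ 4)
        = (y - x) * (8 * sech y ^ 2 - 12 * sech y ^ 4) := by
      intro y hy
      rw [abs_of_nonpos (sub_nonpos.mpr (le_of_lt hy)), neg_sub]
    rw [setIntegral_congr_fun measurableSet_Ioi heq]
    have hint' : IntegrableOn (fun y => (y - x) * (8 * sech y ^ 2 - 12 * sech y ^ 4)) (Ioi x) :=
      hInt.integrableOn.congr_fun heq measurableSet_Ioi
    have hd2 : ∀ y ∈ Ici x, HasDerivAt (fun y => -(F x y))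
        ((y - x) * (8 * sech y ^ 2 - 12 * sech y ^ 4)) y := by
      intro y _
      have := (hd1 x y).neg
      refine this.congr_deriv (Eq.symm ?_)
      ring
    rw [MeasureTheory.integral_Ioi_of_hasDerivAt_of_tendsto'
      hd2 hint' ((F_tendsto_top x).neg)]
    unfold F sech
    field_simp
    linear_combination (2 * Real.cosh x) * hsq
  rw [hIic, hIoi]
  ring
end

section
/- For all x ∈ ℝ, (1/(2√2))·∫_ℝ e^{−√2·|x−y|}·(4sech²y − 12sech⁴y) dy = −2sech²x. Equivalently, with Q²(y) = 2sech²y: (1/(2√2))∫_ℝ e^{−√2|x−y|}·(2Q²(y) − 3Q⁴(y)) dy = −Q²(x). -/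
open MeasureTheory

open Real Set Filter in
noncomputable def Gfun (c x : ℝ) : ℝ :=
  Real.exp (c * x) * ((-(2 * c)) / Real.cosh x ^ 2 - 4 * Real.sinh x / Real.cosh x ^ 3)

open Real Set Filter in
lemma Gfun_deriv (c : ℝ) (hc : c ^ 2 = 2) (y : ℝ) :
    HasDerivAt (Gfun c)
      (Real.exp (c * y) * (4 / Real.cosh y ^ 2 - 12 / Real.cosh y ^ 4)) y := by
  have hcosh : Real.cosh y ≠ 0 := (Real.cosh_pos y).ne'
  have h1 : HasDerivAt (fun t => Real.exp (c * t)) (Real.exp (c * y) * c) y :=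
    (Real.hasDerivAt_exp (c * y)).comp y (by simpa using (hasDerivAt_id y).const_mul c)
  have h2 : HasDerivAt (fun t => Real.cosh t ^ 2) (2 * Real.cosh y ^ 1 * Real.sinh y) y :=
    (Real.hasDerivAt_cosh y).pow 2
  have h3 : HasDerivAt (fun t => Real.cosh t ^ 3) (3 * Real.cosh y ^ 2 * Real.sinh y) y :=
    (Real.hasDerivAt_cosh y).pow 3
  have h4 : HasDerivAt (fun t => (-(2 * c)) / Real.cosh t ^ 2)
      ((0 * Real.cosh y ^ 2 - (-(2 * c)) * (2 * Real.cosh y ^ 1 * Real.sinh y)) /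
        (Real.cosh y ^ 2) ^ 2) y :=
    (hasDerivAt_const y (-(2 * c))).div h2 (pow_ne_zero 2 hcosh)
  have h5 : HasDerivAt (fun t => 4 * Real.sinh t / Real.cosh t ^ 3)
      ((4 * Real.cosh y * Real.cosh y ^ 3 -
          4 * Real.sinh y * (3 * Real.cosh y ^ 2 * Real.sinh y)) /
        (Real.cosh y ^ 3) ^ 2) y :=
    ((Real.hasDerivAt_sinh y).const_mul 4).div h3 (pow_ne_zero 3 hcosh)
  have h := h1.mul (h4.sub h5)
  refine h.congr_deriv (Eq.symm ?_)
  have hsq : Real.cosh y ^ 2 = Real.sinh y ^ 2 + 1 := Real.cosh_sq y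
  simp only [Pi.sub_apply]
  field_simp
  linear_combination (Real.cosh y ^ 2 * 2) * hc +
    12 * hsq

open Real Set Filter in
lemma Gfun_tendsto (c : ℝ) (l : Filter ℝ)
    (h : Tendsto (fun y => Real.exp (c * y)) l (nhds 0)) :
    Tendsto (Gfun c) l (nhds 0) := by
  have hb : ∀ y, ‖Gfun c y‖ ≤ (|2 * c| + 4) * Real.exp (c * y) := by
    intro y
    have h1 : (0 : ℝ) < Real.cosh y := Real.cosh_pos y
    have h2 : 1 ≤ Real.cosh y := Real.one_le_cosh y
    have hs : |Real.sinh y| ≤ Real.cosh y := by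
      rw [Real.abs_sinh, ← Real.cosh_abs y]
      nlinarith [Real.cosh_sub_sinh |y|, Real.exp_pos (-|y|)]
    rw [Gfun, norm_mul, Real.norm_eq_abs, Real.norm_eq_abs, abs_of_pos (Real.exp_pos _),
      mul_comm (|2 * c| + 4)]
    apply mul_le_mul_of_nonneg_left _ (le_of_lt (Real.exp_pos _))
    have e1 : |(-(2 * c)) / Real.cosh y ^ 2| ≤ |2 * c| := by
      rw [abs_div, abs_neg]
      have : (1 : ℝ) ≤ |Real.cosh y ^ 2| := by
        rw [abs_of_pos (by positivity)]; nlinarith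
      calc |2 * c| / |Real.cosh y ^ 2| ≤ |2 * c| / 1 :=
            div_le_div_of_nonneg_left (abs_nonneg _) one_pos this |>.trans_eq rfl |>.trans
              (le_of_eq rfl)
        _ = |2 * c| := div_one _
    have e2 : |4 * Real.sinh y / Real.cosh y ^ 3| ≤ 4 := by
      rw [abs_div, abs_of_pos (by positivity : (0:ℝ) < Real.cosh y ^ 3), abs_mul]
      rw [div_le_iff₀ (by positivity)]
      have : |(4:ℝ)| = 4 := by norm_num
      rw [this]
      nlinarith [abs_nonneg (Real.sinh y)]
    calc |(-(2 * c)) / Real.cosh y ^ 2 - 4 * Real.sinh y / Real.cosh y ^ 3|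
        ≤ |(-(2 * c)) / Real.cosh y ^ 2| + |4 * Real.sinh y / Real.cosh y ^ 3| := abs_sub _ _
      _ ≤ |2 * c| + 4 := add_le_add e1 e2
  have hg : Tendsto (fun y => (|2 * c| + 4) * Real.exp (c * y)) l (nhds 0) := by
    simpa using h.const_mul (|2 * c| + 4)
  exact squeeze_zero_norm hb hg

open Real Set Filter in
lemma int_exp_Iic {c : ℝ} (hc : 0 < c) (x : ℝ) :
    IntegrableOn (fun y => Real.exp (c * y)) (Set.Iic x) := by
  have h : IntegrableOn (fun y => Real.exp (-c * y)) (Set.Ioi (-x)) :=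
    exp_neg_integrableOn_Ioi _ hc
  rw [← integrable_indicator_iff measurableSet_Ioi] at h
  have h2 := h.comp_neg
  rw [integrableOn_Iic_iff_integrableOn_Iio, ← integrable_indicator_iff measurableSet_Iio]
  apply h2.congr
  filter_upwards with y
  by_cases hy : y < x
  · have : -x < -y := by linarith
    simp only [Set.indicator_apply, Set.mem_Ioi, Set.mem_Iio, if_pos this, if_pos hy]
    congr 1; ring
  · have : ¬(-x < -y) := by intro h'; exact hy (by linarith)
    simp [Set.indicator_apply, this, hy]

/-- For all `x`,
`(1/(2√2))∫_ℝ e^{−√2|x−y|}·(4sech²y − 12sech⁴y) dy = −2sech²x`;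
the resolvent kernel of `−d²/dx² + 2` applied to `2Q² − 3Q⁴` returns `−Q²`. -/
theorem stmt_9 (x : ℝ) :
    (1 / (2 * Real.sqrt 2)) *
        ∫ y : ℝ, Real.exp (-(Real.sqrt 2) * |x - y|)
          * (4 * sech y ^ 2 - 12 * sech y ^ 4)
      = -(2 * sech x ^ 2) := by
  have hc0 : (0 : ℝ) < Real.sqrt 2 := Real.sqrt_pos.2 (by norm_num)
  have hc2 : Real.sqrt 2 ^ 2 = 2 := Real.sq_sqrt (by norm_num)
  set c := Real.sqrt 2 with hcdef
  have hcne : c ≠ 0 := hc0.ne'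
  have hsech : ∀ y, 4 * sech y ^ 2 - 12 * sech y ^ 4
      = 4 / Real.cosh y ^ 2 - 12 / Real.cosh y ^ 4 := by
    intro y
    have h := (Real.cosh_pos y).ne'
    simp only [sech]
    field_simp
  -- continuity of the cosh part
  have hcont : Continuous fun y => 4 / Real.cosh y ^ 2 - 12 / Real.cosh y ^ 4 :=
    (continuous_const.div (Real.continuous_cosh.pow 2)
        fun y => pow_ne_zero 2 (Real.cosh_pos y).ne').sub
      (continuous_const.div (Real.continuous_cosh.pow 4)
        fun y => pow_ne_zero 4 (Real.cosh_pos y).ne')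
  have hbdd : ∀ y : ℝ, |4 / Real.cosh y ^ 2 - 12 / Real.cosh y ^ 4| ≤ 16 := by
    intro y
    have h1 : (0 : ℝ) < Real.cosh y := Real.cosh_pos y
    have h2 : 1 ≤ Real.cosh y := Real.one_le_cosh y
    have h3 : (1:ℝ) ≤ Real.cosh y ^ 2 := by nlinarith
    have h4 : (1:ℝ) ≤ Real.cosh y ^ 4 := by nlinarith
    have e1 : 4 / Real.cosh y ^ 2 ≤ 4 := by
      rw [div_le_iff₀ (by positivity)]; nlinarith
    have e2 : 12 / Real.cosh y ^ 4 ≤ 12 := by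
      rw [div_le_iff₀ (by positivity)]; nlinarith
    have e3 : 0 ≤ 4 / Real.cosh y ^ 2 := by positivity
    have e4 : 0 ≤ 12 / Real.cosh y ^ 4 := by positivity
    rw [abs_le]; constructor <;> linarith
  -- integrability on the two half-lines
  have hint1 : IntegrableOn
      (fun y => Real.exp (c * y) * (4 / Real.cosh y ^ 2 - 12 / Real.cosh y ^ 4))
      (Set.Iic x) := by
    apply Integrable.mono' ((int_exp_Iic hc0 x).const_mul 16)
    · exact ((Real.continuous_exp.comp (continuous_const.mul continuous_id)).mul
        hcont).aestronglyMeasurable.restrict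
    · filter_upwards with y
      rw [norm_mul, Real.norm_eq_abs, Real.norm_eq_abs, abs_of_pos (Real.exp_pos _), mul_comm 16]
      exact mul_le_mul_of_nonneg_left (hbdd y) (le_of_lt (Real.exp_pos _))
  have hint2 : IntegrableOn
      (fun y => Real.exp (-c * y) * (4 / Real.cosh y ^ 2 - 12 / Real.cosh y ^ 4))
      (Set.Ioi x) := by
    apply Integrable.mono' ((exp_neg_integrableOn_Ioi x hc0).const_mul 16)
    · exact ((Real.continuous_exp.comp (continuous_const.mul continuous_id)).mul
        hcont).aestronglyMeasurable.restrict
    · filter_upwards with y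
      rw [norm_mul, Real.norm_eq_abs, Real.norm_eq_abs, abs_of_pos (Real.exp_pos _), mul_comm 16]
      exact mul_le_mul_of_nonneg_left (hbdd y) (le_of_lt (Real.exp_pos _))
  -- tendsto facts
  have htend1 : Filter.Tendsto (fun y => Real.exp (c * y)) Filter.atBot (nhds 0) :=
    Real.tendsto_exp_atBot.comp (Filter.tendsto_id.const_mul_atBot hc0)
  have htend2 : Filter.Tendsto (fun y => Real.exp (-c * y)) Filter.atTop (nhds 0) := by
    have h : Filter.Tendsto (fun y : ℝ => -c * y) Filter.atTop Filter.atBot :=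
      Filter.tendsto_id.const_mul_atTop_of_neg (by linarith)
    exact Real.tendsto_exp_atBot.comp h
  -- FTC on each half line
  have h1 : ∫ y in Set.Iic x,
      Real.exp (c * y) * (4 / Real.cosh y ^ 2 - 12 / Real.cosh y ^ 4)
      = Gfun c x - 0 :=
    integral_Iic_of_hasDerivAt_of_tendsto' (fun y _ => Gfun_deriv c hc2 y) hint1
      (Gfun_tendsto c Filter.atBot htend1)
  have h2 : ∫ y in Set.Ioi x,
      Real.exp (-c * y) * (4 / Real.cosh y ^ 2 - 12 / Real.cosh y ^ 4)
      = 0 - Gfun (-c) x :=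
    integral_Ioi_of_hasDerivAt_of_tendsto' (fun y _ => Gfun_deriv (-c) (by rw [neg_pow]; simpa using hc2) y)
      hint2 (Gfun_tendsto (-c) Filter.atTop htend2)
  -- rewrite the integrand on each half line
  have hIic_eq : Set.EqOn
      (fun y => Real.exp (-c * |x - y|) * (4 * sech y ^ 2 - 12 * sech y ^ 4))
      (fun y => Real.exp (-(c * x)) *
        (Real.exp (c * y) * (4 / Real.cosh y ^ 2 - 12 / Real.cosh y ^ 4)))
      (Set.Iic x) := by
    intro y hy
    simp only
    rw [hsech y, abs_of_nonneg (by simp only [Set.mem_Iic] at hy; linarith : (0:ℝ) ≤ x - y),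
      ← mul_assoc, ← Real.exp_add]
    congr 2
    ring
  have hIoi_eq : Set.EqOn
      (fun y => Real.exp (-c * |x - y|) * (4 * sech y ^ 2 - 12 * sech y ^ 4))
      (fun y => Real.exp (c * x) *
        (Real.exp (-c * y) * (4 / Real.cosh y ^ 2 - 12 / Real.cosh y ^ 4)))
      (Set.Ioi x) := by
    intro y hy
    simp only
    rw [hsech y, abs_of_nonpos (by simp only [Set.mem_Ioi] at hy; linarith : x - y ≤ (0:ℝ)),
      ← mul_assoc, ← Real.exp_add]
    congr 2
    ring
  -- integrability of the original integrand
  have hf1 : IntegrableOn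
      (fun y => Real.exp (-c * |x - y|) * (4 * sech y ^ 2 - 12 * sech y ^ 4))
      (Set.Iic x) :=
    MeasureTheory.IntegrableOn.congr_fun (hint1.const_mul (Real.exp (-(c * x))))
      hIic_eq.symm measurableSet_Iic
  have hf2 : IntegrableOn
      (fun y => Real.exp (-c * |x - y|) * (4 * sech y ^ 2 - 12 * sech y ^ 4))
      (Set.Ioi x) :=
    MeasureTheory.IntegrableOn.congr_fun (hint2.const_mul (Real.exp (c * x)))
      hIoi_eq.symm measurableSet_Ioi
  have e1 : ∫ y in Set.Iic x,
      Real.exp (-c * |x - y|) * (4 * sech y ^ 2 - 12 * sech y ^ 4)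
      = Real.exp (-(c * x)) * (Gfun c x - 0) := by
    rw [setIntegral_congr_fun measurableSet_Iic hIic_eq, integral_const_mul, h1]
  have e2 : ∫ y in Set.Ioi x,
      Real.exp (-c * |x - y|) * (4 * sech y ^ 2 - 12 * sech y ^ 4)
      = Real.exp (c * x) * (0 - Gfun (-c) x) := by
    rw [setIntegral_congr_fun measurableSet_Ioi hIoi_eq, integral_const_mul, h2]
  have total : ∫ y : ℝ, Real.exp (-c * |x - y|) * (4 * sech y ^ 2 - 12 * sech y ^ 4)
      = Real.exp (-(c * x)) * (Gfun c x - 0) + Real.exp (c * x) * (0 - Gfun (-c) x) := by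
    rw [← intervalIntegral.integral_Iic_add_Ioi hf1 hf2, e1, e2]
  rw [total]
  have hcosh : Real.cosh x ≠ 0 := (Real.cosh_pos x).ne'
  have hx1 : Real.exp (-(c * x)) * Real.exp (c * x) = 1 := by
    rw [← Real.exp_add]; simp
  have hx2 : Real.exp (c * x) * Real.exp (-c * x) = 1 := by
    rw [← Real.exp_add]; simp
  simp only [Gfun, sech]
  field_simp
  linear_combination (-(4 * c * Real.cosh x)) * hx1
end

section
/- Let u = (u₁, u₂) : ℝ → ℝ² be continuous with x ↦ sech(x)·u₁(x) and x ↦ sech(x)·u₂(x) in L²(ℝ), satisfying for some constant c ∈ ℝ and all x ∈ ℝ: u₁(x) = c − ∫_ℝ |x−y|·sech²(y)·(2u₁(y)+u₂(y)) dy and u₂(x) = (1/√2)·∫_ℝ e^{−√2|x−y|}·sech²(y)·(u₁(y)+2u₂(y)) dy, and ∫_ℝ sech²(y)·(2u₁(y)+u₂(y)) dy = 0. Set b = ∫_ℝ y·sech²(y)·(2u₁(y)+u₂(y)) dy. Then u₁(x) → c + b and u₂(x) → 0 as x → +∞. -/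
open MeasureTheory Filter

lemma continuous_sech : Continuous sech :=
  continuous_const.div Real.continuous_cosh fun x => (Real.cosh_pos x).ne'

lemma abs_sech_le (y : ℝ) : |sech y| ≤ 2 * Real.exp (-|y|) := by
  have hc := Real.cosh_pos y
  have h : Real.exp |y| ≤ 2 * Real.cosh y := by
    rw [Real.cosh_eq]
    rcases abs_cases y with ⟨h1, _⟩ | ⟨h1, _⟩ <;> rw [h1] <;>
      nlinarith [Real.exp_pos y, Real.exp_pos (-y)]
  have habs : |sech y| = 1 / Real.cosh y := by
    rw [sech, abs_of_pos (by positivity)]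
  rw [habs, Real.exp_neg, div_le_iff₀ hc]
  have hE := Real.exp_pos |y|
  have h1 : (Real.exp |y|)⁻¹ * Real.exp |y| = 1 := inv_mul_cancel₀ hE.ne'
  have h2 := mul_le_mul_of_nonneg_left h (le_of_lt (inv_pos.2 hE))
  nlinarith

lemma integrable_exp_neg_abs' : Integrable (fun x : ℝ => Real.exp (-|x|)) (volume : Measure ℝ) := by
  have h1 : IntegrableOn (fun x : ℝ => Real.exp (-|x|)) (Set.Iic 0) volume := by
    apply (integrableOn_exp_Iic 0).congr_fun ?_ measurableSet_Iic
    intro x hx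
    simp [abs_of_nonpos (Set.mem_Iic.1 hx)]
  have h2 : IntegrableOn (fun x : ℝ => Real.exp (-|x|)) (Set.Ioi 0) volume := by
    apply (exp_neg_integrableOn_Ioi 0 one_pos).congr_fun ?_ measurableSet_Ioi
    intro x hx
    simp [abs_of_pos (Set.mem_Ioi.1 hx)]
  have := h1.union h2
  rwa [Set.Iic_union_Ioi, integrableOn_univ] at this

lemma integrable_mul_of_memL2 {f g : ℝ → ℝ} (hf : MemLp f 2 (volume : Measure ℝ))
    (hg : MemLp g 2 (volume : Measure ℝ)) :
    Integrable (fun y => f y * g y) (volume : Measure ℝ) := by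
  apply Integrable.mono' (hf.integrable_sq.add hg.integrable_sq)
    (hf.aestronglyMeasurable.mul hg.aestronglyMeasurable)
  filter_upwards with y
  simp only [Pi.mul_apply, Pi.add_apply, Real.norm_eq_abs]
  rw [abs_mul]
  nlinarith [sq_nonneg (|f y| - |g y|), sq_abs (f y), sq_abs (g y), abs_nonneg (f y),
    abs_nonneg (g y)]

lemma memL2_sech : MemLp sech 2 (volume : Measure ℝ) := by
  rw [memLp_two_iff_integrable_sq continuous_sech.aestronglyMeasurable]
  apply Integrable.mono' (integrable_exp_neg_abs'.const_mul 4)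
    ((continuous_sech.pow 2).aestronglyMeasurable)
  filter_upwards with y
  have h := abs_sech_le y
  have h1 : Real.exp (-|y|) ≤ 1 := Real.exp_le_one_iff.2 (neg_nonpos.2 (abs_nonneg y))
  have h2 := Real.exp_pos (-|y|)
  show ‖sech y ^ 2‖ ≤ _
  rw [Real.norm_eq_abs, abs_pow, sq_abs, ← sq_abs]
  nlinarith [abs_nonneg (sech y)]

lemma memL2_id_mul_sech : MemLp (fun y => y * sech y) 2 (volume : Measure ℝ) := by
  rw [memLp_two_iff_integrable_sq (f := fun y => y * sech y) ((continuous_id'.mul continuous_sech).aestronglyMeasurable)]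
  apply Integrable.mono' (integrable_exp_neg_abs'.const_mul 16)
    (((continuous_id'.mul continuous_sech).pow 2).aestronglyMeasurable)
  filter_upwards with y
  have h := abs_sech_le y
  have e2 : Real.exp |y| = Real.exp (|y| / 2) * Real.exp (|y| / 2) := by
    rw [← Real.exp_add]; ring_nf
  have h1 : |y| ^ 2 ≤ 4 * Real.exp |y| := by
    nlinarith [Real.add_one_le_exp (|y| / 2), abs_nonneg y]
  have e3 : Real.exp (-|y|) * Real.exp |y| = 1 := by
    rw [← Real.exp_add]; simp
  have h2 := Real.exp_pos (-|y|)
  have h3 := Real.exp_pos |y|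
  show ‖(y * sech y) ^ 2‖ ≤ _
  rw [Real.norm_eq_abs, abs_pow, abs_mul, mul_pow]
  nlinarith [abs_nonneg (sech y), abs_nonneg y, sq_nonneg (|y| * |sech y|),
    mul_le_mul h1 (by nlinarith [abs_nonneg (sech y)] :
      |sech y| ^ 2 ≤ 4 * (Real.exp (-|y|) * Real.exp (-|y|))) (by positivity) (by positivity)]

set_option maxHeartbeats 1000000 in
/-- Asymptotics in the proof of Lemma 3.2: under the same hypotheses as the
kernel lemma, with `b = ∫ y·sech²y·(2u₁+u₂)(y) dy`, one has
`u₁(x) → c + b` and `u₂(x) → 0` as `x → +∞`. -/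
theorem stmt_11 (u₁ u₂ : ℝ → ℝ) (hc₁ : Continuous u₁) (hc₂ : Continuous u₂)
    (hL₁ : MemLp (fun x => sech x * u₁ x) 2 (volume : Measure ℝ))
    (hL₂ : MemLp (fun x => sech x * u₂ x) 2 (volume : Measure ℝ))
    (c : ℝ)
    (hint₁ : ∀ x : ℝ, Integrable
      (fun y => |x - y| * sech y ^ 2 * (2 * u₁ y + u₂ y)) (volume : Measure ℝ))
    (hint₂ : ∀ x : ℝ, Integrable
      (fun y => Real.exp (-(Real.sqrt 2) * |x - y|) * sech y ^ 2 * (u₁ y + 2 * u₂ y))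
      (volume : Measure ℝ))
    (hint₃ : Integrable (fun y => sech y ^ 2 * (2 * u₁ y + u₂ y)) (volume : Measure ℝ))
    (heq₁ : ∀ x : ℝ,
      u₁ x = c - ∫ y : ℝ, |x - y| * sech y ^ 2 * (2 * u₁ y + u₂ y))
    (heq₂ : ∀ x : ℝ,
      u₂ x = (1 / Real.sqrt 2) *
        ∫ y : ℝ, Real.exp (-(Real.sqrt 2) * |x - y|) * sech y ^ 2 * (u₁ y + 2 * u₂ y))
    (horth : ∫ y : ℝ, sech y ^ 2 * (2 * u₁ y + u₂ y) = 0)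
    (b : ℝ) (hb : b = ∫ y : ℝ, y * sech y ^ 2 * (2 * u₁ y + u₂ y)) :
    Tendsto u₁ atTop (nhds (c + b)) ∧ Tendsto u₂ atTop (nhds 0) := by
  set K : ℝ → ℝ := fun y => sech y ^ 2 * (2 * u₁ y + u₂ y) with hK
  have hKc : Continuous K := (continuous_sech.pow 2).mul ((continuous_const.mul hc₁).add hc₂)
  -- L² facts
  have hsechK2 : MemLp (fun y => sech y * (2 * u₁ y + u₂ y)) 2 (volume : Measure ℝ) := by
    have he : (fun y => sech y * (2 * u₁ y + u₂ y))
        = fun y => 2 * (sech y * u₁ y) + sech y * u₂ y := by funext y; ring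
    rw [he]; exact (hL₁.const_mul 2).add hL₂
  have hKy_int : Integrable (fun y => y * K y) (volume : Measure ℝ) := by
    have := integrable_mul_of_memL2 memL2_id_mul_sech hsechK2
    apply this.congr
    filter_upwards with y
    simp only [hK]; ring
  -- integrability of the truncated kernel
  have hmax_int : ∀ x : ℝ, Integrable (fun y => max (y - x) 0 * K y) (volume : Measure ℝ) := by
    intro x
    apply Integrable.mono' (hint₁ x).abs
      (((continuous_id'.sub continuous_const).max continuous_const).mul hKc).aestronglyMeasurable
    filter_upwards with y
    have h1 : max (y - x) 0 ≤ |x - y| :=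
      max_le (by rw [abs_sub_comm]; exact le_abs_self _) (abs_nonneg _)
    have h2 : abs (|x - y| * sech y ^ 2 * (2 * u₁ y + u₂ y)) = |x - y| * |K y| := by
      simp only [hK, abs_mul, abs_abs]
      ring
    show ‖max (y - x) 0 * K y‖ ≤ _
    rw [Real.norm_eq_abs, abs_mul, abs_of_nonneg (le_max_right (y - x) 0), h2]
    exact mul_le_mul_of_nonneg_right h1 (abs_nonneg _)
  -- the splitting identity
  have hsplit : ∀ x : ℝ, u₁ x = (c + b) - 2 * ∫ y : ℝ, max (y - x) 0 * K y := by
    intro x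
    have e1 : ∀ y : ℝ, |x - y| * sech y ^ 2 * (2 * u₁ y + u₂ y)
        = (x * K y - y * K y) + 2 * (max (y - x) 0 * K y) := by
      intro y
      have habs : |x - y| = (x - y) + 2 * max (y - x) 0 := by
        rcases le_total y x with h | h
        · rw [abs_of_nonneg (sub_nonneg.2 h), max_eq_right (sub_nonpos.2 h)]; ring
        · rw [abs_of_nonpos (sub_nonpos.2 h), max_eq_left (sub_nonneg.2 h)]; ring
      rw [habs, hK]; ring
    have hI : (∫ y : ℝ, |x - y| * sech y ^ 2 * (2 * u₁ y + u₂ y))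
        = -b + 2 * ∫ y : ℝ, max (y - x) 0 * K y := by
      rw [integral_congr_ae (Filter.Eventually.of_forall e1)]
      have i1 : Integrable (fun y => x * K y - y * K y) (volume : Measure ℝ) :=
        (hint₃.const_mul x).sub hKy_int
      have i2 : Integrable (fun y => 2 * (max (y - x) 0 * K y)) (volume : Measure ℝ) :=
        (hmax_int x).const_mul 2
      rw [integral_add i1 i2, integral_sub (hint₃.const_mul x) hKy_int,
        integral_const_mul, integral_const_mul]
      have hbK : (∫ y : ℝ, y * K y) = b := by
        rw [hb]
        apply integral_congr_ae
        filter_upwards with y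
        simp only [hK]; ring
      have h0 : (∫ y : ℝ, K y) = 0 := horth
      rw [hbK, h0]
      ring
    rw [heq₁ x, hI]; ring
  -- tendsto of the tail term
  have hT : Tendsto (fun x => ∫ y : ℝ, max (y - x) 0 * K y) atTop (nhds 0) := by
    have key : Tendsto (fun x => ∫ y : ℝ, max (y - x) 0 * K y) atTop
        (nhds (∫ _ : ℝ, (0 : ℝ))) := by
      apply tendsto_integral_filter_of_dominated_convergence (fun y => |y * K y|)
      · filter_upwards with x
        exact (((continuous_id'.sub continuous_const).max continuous_const).mul
          hKc).aestronglyMeasurable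
      · filter_upwards [eventually_ge_atTop (0 : ℝ)] with x hx
        filter_upwards with y
        rw [Real.norm_eq_abs, abs_mul, abs_of_nonneg (le_max_right (y - x) 0),
          abs_mul y (K y)]
        apply mul_le_mul_of_nonneg_right _ (abs_nonneg _)
        exact max_le (by cases abs_cases y with
          | inl h => linarith [h.1]
          | inr h => linarith [h.1, abs_nonneg y]) (abs_nonneg _)
      · exact hKy_int.abs
      · filter_upwards with y
        apply tendsto_const_nhds.congr'
        filter_upwards [eventually_ge_atTop y] with x hx
        rw [max_eq_right (sub_nonpos.2 hx), zero_mul]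
    simpa using key
  -- conclusion for u₁
  have hu₁ : Tendsto u₁ atTop (nhds (c + b)) := by
    have : Tendsto (fun x => (c + b) - 2 * ∫ y : ℝ, max (y - x) 0 * K y) atTop
        (nhds ((c + b) - 2 * 0)) := tendsto_const_nhds.sub (hT.const_mul 2)
    rw [mul_zero, sub_zero] at this
    exact this.congr fun x => (hsplit x).symm
  -- conclusion for u₂
  have hs2 : (0 : ℝ) < Real.sqrt 2 := Real.sqrt_pos.2 (by norm_num)
  have hsechU2 : MemLp (fun y => sech y * (u₁ y + 2 * u₂ y)) 2 (volume : Measure ℝ) := by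
    have he : (fun y => sech y * (u₁ y + 2 * u₂ y))
        = fun y => sech y * u₁ y + 2 * (sech y * u₂ y) := by funext y; ring
    rw [he]; exact hL₁.add (hL₂.const_mul 2)
  have hbnd_int : Integrable (fun y => |sech y| * |sech y * (u₁ y + 2 * u₂ y)|)
      (volume : Measure ℝ) := by
    have := (integrable_mul_of_memL2 memL2_sech hsechU2).abs
    apply this.congr
    filter_upwards with y
    rw [abs_mul]
  have hI2 : Tendsto (fun x => ∫ y : ℝ,
      Real.exp (-(Real.sqrt 2) * |x - y|) * sech y ^ 2 * (u₁ y + 2 * u₂ y)) atTop (nhds 0) := by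
    have key : Tendsto (fun x => ∫ y : ℝ,
        Real.exp (-(Real.sqrt 2) * |x - y|) * sech y ^ 2 * (u₁ y + 2 * u₂ y)) atTop
        (nhds (∫ _ : ℝ, (0 : ℝ))) := by
      apply tendsto_integral_filter_of_dominated_convergence
        (fun y => |sech y| * |sech y * (u₁ y + 2 * u₂ y)|)
      · filter_upwards with x
        exact (((Real.continuous_exp.comp (continuous_const.mul
          ((continuous_const.sub continuous_id').abs))).mul (continuous_sech.pow 2)).mul
          ((hc₁.add (continuous_const.mul hc₂)))).aestronglyMeasurable
      · filter_upwards with x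
        filter_upwards with y
        have hexp : Real.exp (-(Real.sqrt 2) * |x - y|) ≤ 1 :=
          Real.exp_le_one_iff.2 (by nlinarith [abs_nonneg (x - y)])
        have hexp' := Real.exp_pos (-(Real.sqrt 2) * |x - y|)
        rw [Real.norm_eq_abs, abs_mul, abs_mul, abs_of_pos hexp']
        calc Real.exp (-(Real.sqrt 2) * |x - y|) * |sech y ^ 2| * |u₁ y + 2 * u₂ y|
            ≤ 1 * |sech y ^ 2| * |u₁ y + 2 * u₂ y| := by
              apply mul_le_mul_of_nonneg_right
                (mul_le_mul_of_nonneg_right hexp (abs_nonneg _)) (abs_nonneg _)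
          _ = |sech y| * |sech y * (u₁ y + 2 * u₂ y)| := by
              rw [one_mul, pow_two, abs_mul, abs_mul]; ring
      · exact hbnd_int
      · filter_upwards with y
        have h1 : Tendsto (fun x : ℝ => |x - y|) atTop atTop := by
          apply tendsto_abs_atTop_atTop.comp
          simpa [sub_eq_add_neg] using tendsto_atTop_add_const_right atTop (-y) tendsto_id
        have h2 : Tendsto (fun x : ℝ => -(Real.sqrt 2) * |x - y|) atTop atBot := by
          have h3 := (h1.const_mul_atTop hs2).const_mul_atTop_of_neg
            (show (-1 : ℝ) < 0 by norm_num)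
          apply h3.congr
          intro x; ring
        have h4 : Tendsto (fun x : ℝ => Real.exp (-(Real.sqrt 2) * |x - y|)) atTop (nhds 0) :=
          Real.tendsto_exp_atBot.comp h2
        have h5 := (h4.mul_const (sech y ^ 2)).mul_const (u₁ y + 2 * u₂ y)
        simpa using h5
    simpa using key
  have hu₂ : Tendsto u₂ atTop (nhds 0) := by
    have := hI2.const_mul (1 / Real.sqrt 2)
    rw [mul_zero] at this
    exact this.congr fun x => (heq₂ x).symm
  exact ⟨hu₁, hu₂⟩
end

section
/- Let 0 < α < 1 and 2 < p < 4, and set W(x) = ((p+1)/2)·sech²(((p−1)/2)x) (so W = Q_p^{p−1}). Let u = (u₁, u₂) : ℝ → ℝ² be continuous with x ↦ sech(x)·u₁(x) and x ↦ sech(x)·u₂(x) in L²(ℝ), and suppose that for all x ∈ ℝ: u₁(x) = (1/(2α))·∫_ℝ e^{−α|x−y|}·W(y)·(((p+1)/2)·u₁(y) + ((p−1)/2)·u₂(y)) dy and u₂(x) = (1/(2√(2−α²)))·∫_ℝ e^{−√(2−α²)|x−y|}·W(y)·(((p−1)/2)·u₁(y) + ((p+1)/2)·u₂(y)) dy. Then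 u₁ and u₂ belong to L²(ℝ). -/
open MeasureTheory

lemma aux_sech_pos (x : ℝ) : 0 < sech x := by
  unfold sech; positivity

lemma aux_cosh_le (x : ℝ) : Real.cosh x ≤ Real.exp |x| := by
  rw [Real.cosh_eq]
  rcases abs_cases x with ⟨h, h0⟩ | ⟨h, h0⟩ <;> rw [h]
  · have := Real.exp_le_exp.mpr (by linarith : -x ≤ x); linarith
  · have := Real.exp_le_exp.mpr (by linarith : x ≤ -x); linarith

lemma aux_exp_le_two_cosh (x : ℝ) : Real.exp |x| ≤ 2 * Real.cosh x := by
  rw [Real.cosh_eq]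
  rcases abs_cases x with ⟨h, h0⟩ | ⟨h, h0⟩ <;> rw [h]
  · have := (Real.exp_pos (-x)).le; linarith
  · have := (Real.exp_pos x).le; linarith

lemma aux_sech_le (x : ℝ) : sech x ≤ 2 * Real.exp (-|x|) := by
  unfold sech
  rw [div_le_iff₀ (Real.cosh_pos x)]
  have h1 := aux_exp_le_two_cosh x
  have h2 : Real.exp (-|x|) * Real.exp |x| = 1 := by rw [← Real.exp_add]; simp
  nlinarith [Real.exp_pos (-|x|), mul_le_mul_of_nonneg_left h1 (Real.exp_pos (-|x|)).le]

lemma aux_sech_mul_cosh (x : ℝ) : sech x * Real.cosh x = 1 := by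
  unfold sech
  field_simp

lemma aux_int_exp_neg_abs {b : ℝ} (hb : 0 < b) :
    Integrable (fun x : ℝ => Real.exp (-b * |x|)) := by
  have h1 : IntegrableOn (fun x : ℝ => Real.exp (-b * |x|)) (Set.Ici 0) := by
    rw [integrableOn_Ici_iff_integrableOn_Ioi]
    refine (exp_neg_integrableOn_Ioi 0 hb).congr_fun (fun x hx => ?_) measurableSet_Ioi
    rw [abs_of_pos hx]
  have hg : Integrable ((Set.Ici (0:ℝ)).indicator (fun x : ℝ => Real.exp (-b * |x|))) := by
    rwa [integrable_indicator_iff measurableSet_Ici]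
  have hg2 : Integrable
      (fun x : ℝ => (Set.Ici (0:ℝ)).indicator (fun x : ℝ => Real.exp (-b * |x|)) (-x)) :=
    hg.comp_neg
  refine (hg.add hg2).mono' ?_ ?_
  · exact (Real.continuous_exp.comp (continuous_const.mul continuous_abs)).aestronglyMeasurable
  · refine Filter.Eventually.of_forall (fun x => ?_)
    rw [Real.norm_eq_abs, abs_of_pos (Real.exp_pos _)]
    rcases le_or_gt 0 x with h | h
    · have h' : (Set.Ici (0:ℝ)).indicator (fun x : ℝ => Real.exp (-b * |x|)) x
          = Real.exp (-b * |x|) := Set.indicator_of_mem h _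
      simp only [Pi.add_apply, h']
      exact le_add_of_nonneg_right (Set.indicator_nonneg (fun y _ => (Real.exp_pos _).le) _)
    · have h' : (Set.Ici (0:ℝ)).indicator (fun x : ℝ => Real.exp (-b * |x|)) (-x)
          = Real.exp (-b * |x|) := by
        rw [Set.indicator_of_mem (by simpa using h.le) (fun x : ℝ => Real.exp (-b * |x|)), abs_neg]
      simp only [Pi.add_apply, h']
      exact le_add_of_nonneg_left (Set.indicator_nonneg (fun y _ => (Real.exp_pos _).le) _)

lemma aux_memL2_exp_neg_abs {b : ℝ} (hb : 0 < b) :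
    MemLp (fun x : ℝ => Real.exp (-b * |x|)) 2 (volume : Measure ℝ) := by
  have hm : AEStronglyMeasurable (fun x : ℝ => Real.exp (-b * |x|)) volume :=
    (Real.continuous_exp.comp (continuous_const.mul continuous_abs)).aestronglyMeasurable
  rw [memLp_two_iff_integrable_sq hm]
  have h : (fun x : ℝ => Real.exp (-b * |x|) ^ 2) = fun x : ℝ => Real.exp (-(2*b) * |x|) := by
    funext x; rw [sq, ← Real.exp_add]; ring_nf
  rw [h]
  exact aux_int_exp_neg_abs (by linarith)

lemma aux_integrable_mul {f g : ℝ → ℝ} (hf : MemLp f 2 (volume : Measure ℝ))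
    (hg : MemLp g 2 (volume : Measure ℝ)) :
    Integrable (fun x => f x * g x) := by
  rw [← memLp_one_iff_integrable]
  have h := hg.smul (φ := f) hf (p := 2) (q := 2) (r := 1)
  exact h

/-- Remark 3.3: for `0 < α < 1` and `2 < p < 4`, a continuous solution
`u = (u₁,u₂)` of the resolvent integral equations `u = −R^{(α)}V^{(p)}u`
with `sech·u₁, sech·u₂ ∈ L²` is in fact in `L²`, so `z = 1 − α²` is a true
eigenvalue. -/
theorem stmt_17 (α p : ℝ) (hα : 0 < α ∧ α < 1) (hp : 2 < p ∧ p < 4)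
    (W : ℝ → ℝ) (hW : ∀ x, W x = ((p + 1) / 2) * (sech (((p - 1) / 2) * x)) ^ 2)
    (u₁ u₂ : ℝ → ℝ) (hc₁ : Continuous u₁) (hc₂ : Continuous u₂)
    (hL₁ : MemLp (fun x => sech x * u₁ x) 2 (volume : Measure ℝ))
    (hL₂ : MemLp (fun x => sech x * u₂ x) 2 (volume : Measure ℝ))
    (heq₁ : ∀ x : ℝ, u₁ x = (1 / (2 * α)) *
      ∫ y : ℝ, Real.exp (-α * |x - y|) * W y
        * (((p + 1) / 2) * u₁ y + ((p - 1) / 2) * u₂ y))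
    (heq₂ : ∀ x : ℝ, u₂ x = (1 / (2 * Real.sqrt (2 - α ^ 2))) *
      ∫ y : ℝ, Real.exp (-(Real.sqrt (2 - α ^ 2)) * |x - y|) * W y
        * (((p - 1) / 2) * u₁ y + ((p + 1) / 2) * u₂ y)) :
    MemLp u₁ 2 (volume : Measure ℝ) ∧ MemLp u₂ 2 (volume : Measure ℝ) := by
  obtain ⟨hα0, hα1⟩ := hα
  obtain ⟨hp2, hp4⟩ := hp
  set β : ℝ := min α (p - 2) / 2 with hβdef
  have hmin : 0 < min α (p - 2) := lt_min hα0 (by linarith)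
  have hβ : 0 < β := by rw [hβdef]; linarith
  set v : ℝ → ℝ := fun y => |sech y * u₁ y| + |sech y * u₂ y| with hvdef
  have hvmem : MemLp v 2 (volume : Measure ℝ) := by
    have h := hL₁.norm.add hL₂.norm
    have hv' : v = (fun x => ‖sech x * u₁ x‖) + fun x => ‖sech x * u₂ x‖ := by
      funext y
      show |sech y * u₁ y| + |sech y * u₂ y| = _
      simp only [Pi.add_apply, Real.norm_eq_abs]
    rw [hv']; exact h
  have hv0 : ∀ y, 0 ≤ v y := fun y => by positivity
  have hE : Integrable (fun y => Real.exp (-β * |y|) * v y) :=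
    aux_integrable_mul (aux_memL2_exp_neg_abs hβ) hvmem
  set K : ℝ := ∫ y, Real.exp (-β * |y|) * v y with hKdef
  have hK0 : 0 ≤ K :=
    integral_nonneg (fun y => mul_nonneg (Real.exp_pos _).le (hv0 y))
  have hWnn : ∀ y, 0 ≤ W y := fun y => by
    rw [hW]; exact mul_nonneg (by linarith) (sq_nonneg _)
  -- W(y) * cosh(y) decays like exp(-(p-2)|y|)
  have hWcosh : ∀ y, W y * Real.cosh y ≤ 10 * Real.exp (-(p - 2) * |y|) := by
    intro y
    rw [hW]
    have hk : |((p - 1) / 2) * y| = ((p - 1) / 2) * |y| := by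
      rw [abs_mul, abs_of_pos (by linarith : (0:ℝ) < (p - 1) / 2)]
    have h1 : sech (((p - 1) / 2) * y) ≤ 2 * Real.exp (-(((p - 1) / 2) * |y|)) := by
      have h := aux_sech_le (((p - 1) / 2) * y); rwa [hk] at h
    have h2 : (sech (((p - 1) / 2) * y)) ^ 2 ≤ 4 * Real.exp (-((p - 1) * |y|)) := by
      have hp0 := (aux_sech_pos (((p - 1) / 2) * y)).le
      calc (sech (((p - 1) / 2) * y)) ^ 2
          ≤ (2 * Real.exp (-(((p - 1) / 2) * |y|))) ^ 2 := by
            exact pow_le_pow_left₀ hp0 h1 2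
        _ = 4 * Real.exp (-((p - 1) * |y|)) := by
            rw [mul_pow, sq (Real.exp _), ← Real.exp_add]
            norm_num; ring_nf
    have h3 := aux_cosh_le y
    have hcosh0 := (Real.cosh_pos y).le
    calc (p + 1) / 2 * sech ((p - 1) / 2 * y) ^ 2 * Real.cosh y
        ≤ (p + 1) / 2 * (4 * Real.exp (-((p - 1) * |y|))) * Real.exp |y| := by
          have := mul_le_mul (mul_le_mul_of_nonneg_left h2 (by linarith : (0:ℝ) ≤ (p+1)/2))
            h3 hcosh0 (by positivity)
          linarith
      _ = 2 * (p + 1) * Real.exp (-((p - 1) * |y|) + |y|) := by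
          rw [Real.exp_add]; ring
      _ = 2 * (p + 1) * Real.exp (-(p - 2) * |y|) := by
          congr 1; congr 1; ring
      _ ≤ 10 * Real.exp (-(p - 2) * |y|) := by
          have := (Real.exp_pos (-(p - 2) * |y|)).le
          nlinarith
  -- kernel decay transfer
  have hker : ∀ x y : ℝ, Real.exp (-α * |x - y|) * Real.exp (-(p - 2) * |y|)
      ≤ Real.exp (-β * |x|) * Real.exp (-β * |y|) := by
    intro x y
    rw [← Real.exp_add, ← Real.exp_add]
    apply Real.exp_le_exp.mpr
    have hm1 : min α (p - 2) ≤ α := min_le_left _ _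
    have hm2 : min α (p - 2) ≤ p - 2 := min_le_right _ _
    have habs : |x| ≤ |x - y| + |y| := by
      calc |x| = |(x - y) + y| := by ring_nf
        _ ≤ |x - y| + |y| := abs_add_le _ _
    have f1 := mul_le_mul_of_nonneg_right hm1 (abs_nonneg (x - y))
    have f2 := mul_le_mul_of_nonneg_right hm2 (abs_nonneg y)
    have f3 := mul_le_mul_of_nonneg_left habs hmin.le
    have f4 : 0 ≤ α * |x - y| := mul_nonneg hα0.le (abs_nonneg _)
    rw [mul_add] at f3
    have g1 : β * |x| = (min α (p - 2)) * |x| / 2 := by rw [hβdef]; ring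
    have g2 : β * |y| = (min α (p - 2)) * |y| / 2 := by rw [hβdef]; ring
    linarith
  -- core pointwise bound on the integrand
  have hcore : ∀ (c₁ c₂ : ℝ), |c₁| ≤ 5/2 → |c₂| ≤ 5/2 → ∀ x y : ℝ,
      |Real.exp (-α * |x - y|) * W y * (c₁ * u₁ y + c₂ * u₂ y)| ≤
      25 * Real.exp (-β * |x|) * (Real.exp (-β * |y|) * v y) := by
    intro c₁ c₂ hc₁' hc₂' x y
    have e2 : |u₁ y| + |u₂ y| = Real.cosh y * v y := by
      have h₁ : |sech y * u₁ y| = sech y * |u₁ y| := by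
        rw [abs_mul, abs_of_pos (aux_sech_pos y)]
      have h₂ : |sech y * u₂ y| = sech y * |u₂ y| := by
        rw [abs_mul, abs_of_pos (aux_sech_pos y)]
      have h₃ := aux_sech_mul_cosh y
      simp only [hvdef, h₁, h₂]
      rw [mul_add, ← mul_assoc, ← mul_assoc, mul_comm (Real.cosh y) (sech y), h₃,
        one_mul, one_mul]
    have e1 : |c₁ * u₁ y + c₂ * u₂ y| ≤ (5/2) * (Real.cosh y * v y) := by
      rw [← e2]
      calc |c₁ * u₁ y + c₂ * u₂ y| ≤ |c₁ * u₁ y| + |c₂ * u₂ y| := abs_add_le _ _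
        _ = |c₁| * |u₁ y| + |c₂| * |u₂ y| := by rw [abs_mul, abs_mul]
        _ ≤ (5/2) * |u₁ y| + (5/2) * |u₂ y| :=
            add_le_add (mul_le_mul_of_nonneg_right hc₁' (abs_nonneg _))
              (mul_le_mul_of_nonneg_right hc₂' (abs_nonneg _))
        _ = (5/2) * (|u₁ y| + |u₂ y|) := by ring
    have hWy := hWnn y
    have habs : |Real.exp (-α * |x - y|) * W y * (c₁ * u₁ y + c₂ * u₂ y)|
        = Real.exp (-α * |x - y|) * W y * |c₁ * u₁ y + c₂ * u₂ y| := by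
      rw [abs_mul, abs_mul, abs_of_pos (Real.exp_pos _), abs_of_nonneg hWy]
    rw [habs]
    calc Real.exp (-α * |x - y|) * W y * |c₁ * u₁ y + c₂ * u₂ y|
        ≤ Real.exp (-α * |x - y|) * W y * ((5/2) * (Real.cosh y * v y)) :=
          mul_le_mul_of_nonneg_left e1 (mul_nonneg (Real.exp_pos _).le hWy)
      _ = (5/2) * Real.exp (-α * |x - y|) * (W y * Real.cosh y) * v y := by ring
      _ ≤ (5/2) * Real.exp (-α * |x - y|) * (10 * Real.exp (-(p - 2) * |y|)) * v y := by
          refine mul_le_mul_of_nonneg_right ?_ (hv0 y)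
          exact mul_le_mul_of_nonneg_left (hWcosh y) (by positivity)
      _ = 25 * (Real.exp (-α * |x - y|) * Real.exp (-(p - 2) * |y|)) * v y := by ring
      _ ≤ 25 * (Real.exp (-β * |x|) * Real.exp (-β * |y|)) * v y :=
          mul_le_mul_of_nonneg_right
            (mul_le_mul_of_nonneg_left (hker x y) (by norm_num)) (hv0 y)
      _ = 25 * Real.exp (-β * |x|) * (Real.exp (-β * |y|) * v y) := by ring
  -- integral bound machinery
  have hint : ∀ x : ℝ, ∀ f : ℝ → ℝ,
      (∀ y, ‖f y‖ ≤ 25 * Real.exp (-β * |x|) * (Real.exp (-β * |y|) * v y)) →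
      |∫ y, f y| ≤ 25 * Real.exp (-β * |x|) * K := by
    intro x f hf
    have h1 : ‖∫ y, f y‖ ≤ ∫ y, ‖f y‖ := norm_integral_le_integral_norm _
    rw [Real.norm_eq_abs] at h1
    have h2 : ∫ y, ‖f y‖ ≤ ∫ y, 25 * Real.exp (-β * |x|) * (Real.exp (-β * |y|) * v y) := by
      refine integral_mono_of_nonneg (Filter.Eventually.of_forall fun y => norm_nonneg _)
        (hE.const_mul _) (Filter.Eventually.of_forall hf)
    have h3 : ∫ y, 25 * Real.exp (-β * |x|) * (Real.exp (-β * |y|) * v y)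
        = 25 * Real.exp (-β * |x|) * K := integral_const_mul _ _
    linarith
  have hcoef1 : |(p + 1) / 2| ≤ (5:ℝ)/2 := by
    rw [abs_of_nonneg (by linarith)]; linarith
  have hcoef2 : |(p - 1) / 2| ≤ (5:ℝ)/2 := by
    rw [abs_of_nonneg (by linarith)]; linarith
  -- bound for u₁
  have hb₁ : ∀ x : ℝ, |u₁ x| ≤ 1 / (2 * α) * (25 * K) * Real.exp (-β * |x|) := by
    intro x
    rw [heq₁ x, abs_mul, abs_of_pos (by positivity : (0:ℝ) < 1 / (2 * α))]
    have h := hint x _ (fun y => by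
      rw [Real.norm_eq_abs]; exact hcore _ _ hcoef1 hcoef2 x y)
    calc 1 / (2 * α) * |∫ y, Real.exp (-α * |x - y|) * W y
          * (((p + 1) / 2) * u₁ y + ((p - 1) / 2) * u₂ y)|
        ≤ 1 / (2 * α) * (25 * Real.exp (-β * |x|) * K) :=
          mul_le_mul_of_nonneg_left h (by positivity)
      _ = 1 / (2 * α) * (25 * K) * Real.exp (-β * |x|) := by ring
  -- bound for u₂
  have hs2 : (0:ℝ) < 2 - α ^ 2 := by nlinarith
  have hs0 : 0 < Real.sqrt (2 - α ^ 2) := Real.sqrt_pos.mpr hs2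
  have hsα : α ≤ Real.sqrt (2 - α ^ 2) := by
    calc α = Real.sqrt (α ^ 2) := by rw [Real.sqrt_sq hα0.le]
      _ ≤ Real.sqrt (2 - α ^ 2) := Real.sqrt_le_sqrt (by nlinarith)
  have hb₂ : ∀ x : ℝ, |u₂ x| ≤ 1 / (2 * α) * (25 * K) * Real.exp (-β * |x|) := by
    intro x
    rw [heq₂ x, abs_mul, abs_of_pos (by positivity : (0:ℝ) < 1 / (2 * Real.sqrt (2 - α ^ 2)))]
    have h := hint x _ (fun y => by
      rw [Real.norm_eq_abs]
      have hstep : |Real.exp (-(Real.sqrt (2 - α ^ 2)) * |x - y|) * W y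
          * (((p - 1) / 2) * u₁ y + ((p + 1) / 2) * u₂ y)|
          ≤ |Real.exp (-α * |x - y|) * W y
          * (((p - 1) / 2) * u₁ y + ((p + 1) / 2) * u₂ y)| := by
        rw [abs_mul, abs_mul, abs_mul, abs_mul,
          abs_of_pos (Real.exp_pos _), abs_of_pos (Real.exp_pos _)]
        refine mul_le_mul_of_nonneg_right (mul_le_mul_of_nonneg_right ?_ (abs_nonneg _))
          (abs_nonneg _)
        refine Real.exp_le_exp.mpr ?_
        have hm := mul_le_mul_of_nonneg_right hsα (abs_nonneg (x - y))
        linarith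
      exact hstep.trans (hcore _ _ hcoef2 hcoef1 x y))
    have hpref : 1 / (2 * Real.sqrt (2 - α ^ 2)) ≤ 1 / (2 * α) := by
      apply one_div_le_one_div_of_le (by positivity)
      linarith
    have hInn : 0 ≤ |∫ y, Real.exp (-(Real.sqrt (2 - α ^ 2)) * |x - y|) * W y
        * (((p - 1) / 2) * u₁ y + ((p + 1) / 2) * u₂ y)| := abs_nonneg _
    calc 1 / (2 * Real.sqrt (2 - α ^ 2)) * |∫ y, Real.exp (-(Real.sqrt (2 - α ^ 2)) * |x - y|)
          * W y * (((p - 1) / 2) * u₁ y + ((p + 1) / 2) * u₂ y)|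
        ≤ 1 / (2 * α) * (25 * Real.exp (-β * |x|) * K) := by
          calc 1 / (2 * Real.sqrt (2 - α ^ 2)) * |∫ y, Real.exp (-(Real.sqrt (2 - α ^ 2))
                * |x - y|) * W y * (((p - 1) / 2) * u₁ y + ((p + 1) / 2) * u₂ y)|
              ≤ 1 / (2 * α) * |∫ y, Real.exp (-(Real.sqrt (2 - α ^ 2)) * |x - y|) * W y
                * (((p - 1) / 2) * u₁ y + ((p + 1) / 2) * u₂ y)| :=
                mul_le_mul_of_nonneg_right hpref hInn
            _ ≤ 1 / (2 * α) * (25 * Real.exp (-β * |x|) * K) :=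
                mul_le_mul_of_nonneg_left h (by positivity)
      _ = 1 / (2 * α) * (25 * K) * Real.exp (-β * |x|) := by ring
  -- conclusion
  have hg : MemLp (fun x : ℝ => 1 / (2 * α) * (25 * K) * Real.exp (-β * |x|)) 2
      (volume : Measure ℝ) := (aux_memL2_exp_neg_abs hβ).const_mul _
  have hC0 : (0:ℝ) ≤ 1 / (2 * α) * (25 * K) := by positivity
  constructor
  · refine hg.of_le hc₁.aestronglyMeasurable (Filter.Eventually.of_forall fun x => ?_)
    rw [Real.norm_eq_abs, Real.norm_eq_abs,
      abs_of_nonneg (mul_nonneg hC0 (Real.exp_pos _).le)]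
    exact hb₁ x
  · refine hg.of_le hc₂.aestronglyMeasurable (Filter.Eventually.of_forall fun x => ?_)
    rw [Real.norm_eq_abs, Real.norm_eq_abs,
      abs_of_nonneg (mul_nonneg hC0 (Real.exp_pos _).le)]
    exact hb₂ x
end
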